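/- Let P = t² + b t + c ∈ 𝕊[t] with Re(b) = 0 and b b̄ < 0, and suppose λ, μ ∈ ℝ with c = λ + μ b. Then the real norm polynomial satisfies P P̄ = (t² + λ)² + (t + μ)² b b̄ = (t² + λ + √(-b b̄)(t + μ))(t² + λ - √(-b b̄)(t + μ)). -/

import Mathlib

open Polynomial

notation "𝕊" => QuaternionAlgebra ℝ (-1) 0 1

/-! With `A = t² + λ` and `B = t + μ`, whose coefficients are real and hence central, the
hypotheses give `P = A + b B` and `P̄ = A - b B`, so `P P̄ = A² - b² B²`. Since `Re b = 0`,
`b² = -b b̄`, which is real; writing it as the square of the real number `√(-b b̄)` and applying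
the same identity once more gives the factorization. -/

theorem Commute.add_mul_mul_sub_mul {R : Type*} [Ring R] {a b x : R}
    (hab : Commute a b) (hax : Commute a x) (hbx : Commute b x) :
    (a + x * b) * (a - x * b) = a ^ 2 - x ^ 2 * b ^ 2 := by
  rw [← (hax.mul_right hab).mul_self_sub_mul_self_eq, sq, sq, sq, hbx.mul_mul_mul_comm]

namespace QuaternionAlgebra

open scoped Quaternion

variable {R : Type*} [CommRing R] {c₁ c₂ c₃ : R}

theorem commute_C_coe (r : R) (p : ℍ[R,c₁,c₂,c₃][X]) : Commute (C (r : ℍ[R,c₁,c₂,c₃])) p := by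
  rw [← coe_algebraMap, ← Polynomial.algebraMap_apply]
  exact Algebra.commutes r p

theorem commute_X_sq_add_C_coe (r : R) (p : ℍ[R,c₁,c₂,c₃][X]) :
    Commute (X ^ 2 + C (r : ℍ[R,c₁,c₂,c₃])) p :=
  ((commute_X p).pow_left 2).add_left (commute_C_coe r p)

theorem commute_X_add_C_coe (r : R) (p : ℍ[R,c₁,c₂,c₃][X]) :
    Commute (X + C (r : ℍ[R,c₁,c₂,c₃])) p :=
  (commute_X p).add_left (commute_C_coe r p)

theorem X_sq_add_C_mul_X_add_C_eq (b : ℍ[R,c₁,c₂,c₃]) (lam mu : R) :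
    X ^ 2 + C b * X + C ((lam : ℍ[R,c₁,c₂,c₃]) + mu * b) =
      X ^ 2 + C (lam : ℍ[R,c₁,c₂,c₃]) + C b * (X + C (mu : ℍ[R,c₁,c₂,c₃])) := by
  rw [coe_commutes, C_add, C_mul]
  noncomm_ring

theorem star_eq_neg_of_re_eq_zero {b : ℍ[R,c₁,0,c₃]} (hb : b.re = 0) : star b = -b := by
  rw [star_eq_two_re_sub, hb]
  simp

theorem X_sq_add_C_star_mul_X_add_C_star_eq {b : ℍ[R,c₁,0,c₃]} (hb : b.re = 0) (lam mu : R) :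
    X ^ 2 + C (star b) * X + C (star ((lam : ℍ[R,c₁,0,c₃]) + mu * b)) =
      X ^ 2 + C (lam : ℍ[R,c₁,0,c₃]) - C b * (X + C (mu : ℍ[R,c₁,0,c₃])) := by
  rw [star_add, star_mul, star_coe, star_coe, star_eq_neg_of_re_eq_zero hb, neg_mul, C_add, C_neg,
    C_neg, C_mul]
  noncomm_ring

end QuaternionAlgebra

open QuaternionAlgebra in
/-- For `P = t² + b t + c` with `Re b = 0`, `b b̄ < 0` and `c = λ + μ b`, the
norm polynomial factors as
`P P̄ = (t² + λ)² + (t + μ)² b b̄ = (t² + λ + √(-b b̄)(t + μ))(t² + λ - √(-b b̄)(t + μ))`. -/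
theorem norm_polynomial_factorization (b : 𝕊) (hb0 : b.re = 0)
    (n : ℝ) (hn : b * star b = (n : 𝕊)) (hneg : n < 0)
    (lam mu : ℝ) (c : 𝕊) (hc : c = (lam : 𝕊) + (mu : 𝕊) * b) :
    (X ^ 2 + C b * X + C c) * (X ^ 2 + C (star b) * X + C (star c)) =
        (X ^ 2 + C ((lam : ℝ) : 𝕊)) ^ 2 +
          (X + C ((mu : ℝ) : 𝕊)) ^ 2 * C ((n : ℝ) : 𝕊) ∧
    (X ^ 2 + C b * X + C c) * (X ^ 2 + C (star b) * X + C (star c)) =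
        (X ^ 2 + C ((lam : ℝ) : 𝕊) +
            C ((Real.sqrt (-n) : ℝ) : 𝕊) * (X + C ((mu : ℝ) : 𝕊))) *
          (X ^ 2 + C ((lam : ℝ) : 𝕊) -
            C ((Real.sqrt (-n) : ℝ) : 𝕊) * (X + C ((mu : ℝ) : 𝕊))) := by
  have hb_sq : b ^ 2 = -(n : 𝕊) := by
    rw [← hn, star_eq_neg_of_re_eq_zero hb0, mul_neg, neg_neg, sq]
  have hsqrt_sq : ((Real.sqrt (-n) : ℝ) : 𝕊) ^ 2 = -(n : 𝕊) := by
    rw [← coe_pow, Real.sq_sqrt (by linarith), coe_neg]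
  have hnorm : (X ^ 2 + C b * X + C c) * (X ^ 2 + C (star b) * X + C (star c)) =
      (X ^ 2 + C (lam : 𝕊)) ^ 2 - C (-(n : 𝕊)) * (X + C (mu : 𝕊)) ^ 2 := by
    rw [hc, X_sq_add_C_mul_X_add_C_eq, X_sq_add_C_star_mul_X_add_C_star_eq hb0, ← hb_sq, C_pow]
    exact Commute.add_mul_mul_sub_mul (commute_X_sq_add_C_coe _ _) (commute_X_sq_add_C_coe _ _)
      (commute_X_add_C_coe _ _)
  refine ⟨?_, ?_⟩
  · rw [hnorm, map_neg, neg_mul, sub_neg_eq_add, (commute_C_coe n _).eq]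
  · rw [hnorm, Commute.add_mul_mul_sub_mul (commute_X_sq_add_C_coe _ _)
      (commute_X_sq_add_C_coe _ _) (commute_X_add_C_coe _ _), ← C_pow, hsqrt_sq]
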